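/- Let α, β ∈ ℝ, 0 < ε < 1/2, T > 1, L > 1, let n ∈ ℕ be positive, and let (s₀,t₀) ∈ [0,T]² satisfy ⟨nα⟩ ≤ e^{−s₀}·ε, ⟨nβ⟩ ≤ e^{−t₀}·ε, and s₀ + t₀ − log(n/ε) > √2·L^{1/2}. Then for every k ∈ ℕ with 1 ≤ k ≤ e^{√2·L^{1/2}/3}, one has kn < e^{2T} and kn·⟨knα⟩·⟨knβ⟩ ≤ ε³. -/
import Mathlib


open Filter MeasureTheory

/-- `⟨x⟩`: the distance from `x` to the nearest integer. -/
noncomputable def nearInt (x : ℝ) : ℝ := ⨅ m : ℤ, |x - (m : ℝ)|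

lemma nearInt_bdd (x : ℝ) : BddBelow (Set.range fun m : ℤ => |x - (m : ℝ)|) :=
  ⟨0, by rintro y ⟨m, rfl⟩; exact abs_nonneg _⟩

lemma nearInt_nonneg (x : ℝ) : 0 ≤ nearInt x :=
  le_ciInf fun m => abs_nonneg _

lemma nearInt_eq_round (x : ℝ) : nearInt x = |x - round x| := by
  apply le_antisymm
  · exact ciInf_le (nearInt_bdd x) (round x)
  · apply le_ciInf
    intro m
    rcases eq_or_ne m (round x) with h | h
    · simp [h]
    · have h1 : (1 : ℝ) ≤ |(m : ℝ) - (round x : ℝ)| := by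
        have : (1 : ℤ) ≤ |m - round x| := Int.one_le_abs (sub_ne_zero.mpr h)
        calc (1:ℝ) = ((1:ℤ):ℝ) := by norm_num
        _ ≤ ((|m - round x| : ℤ) : ℝ) := by exact_mod_cast this
        _ = |(m:ℝ) - (round x : ℝ)| := by push_cast; rfl
      have h2 : |x - round x| ≤ 1/2 := abs_sub_round x
      have h3 : |(m : ℝ) - (round x : ℝ)| ≤ |x - m| + |x - round x| := by
        have := abs_sub (x - (round x : ℝ)) (x - (m : ℝ))
        calc |(m : ℝ) - (round x : ℝ)| = |(x - (round x:ℝ)) - (x - (m:ℝ))| := by ring_nf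
        _ ≤ |x - (round x:ℝ)| + |x - (m:ℝ)| := abs_sub _ _
        _ = |x - m| + |x - round x| := by ring
      linarith

lemma nearInt_nat_mul (k : ℕ) (x : ℝ) : nearInt (k * x) ≤ k * nearInt x := by
  rw [nearInt_eq_round x]
  calc nearInt (k * x) ≤ |k * x - ((k * round x : ℤ) : ℝ)| :=
        ciInf_le (nearInt_bdd _) (k * round x)
  _ = (k : ℝ) * |x - round x| := by
      push_cast
      rw [show (k:ℝ) * x - k * round x = k * (x - round x) by ring, abs_mul,
        abs_of_nonneg (by positivity : (0:ℝ) ≤ (k:ℝ))]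

theorem stmt17 (α β ε T L : ℝ) (hε0 : 0 < ε) (hε1 : ε < 1 / 2) (hT : 1 < T) (hL : 1 < L)
    (n : ℕ) (hn : 0 < n) (s₀ t₀ : ℝ)
    (hs₀ : s₀ ∈ Set.Icc 0 T) (ht₀ : t₀ ∈ Set.Icc 0 T)
    (h1 : nearInt (n * α) ≤ Real.exp (-s₀) * ε)
    (h2 : nearInt (n * β) ≤ Real.exp (-t₀) * ε)
    (h3 : Real.sqrt 2 * Real.sqrt L < s₀ + t₀ - Real.log (n / ε)) :
    ∀ k : ℕ, 1 ≤ k → (k : ℝ) ≤ Real.exp (Real.sqrt 2 * Real.sqrt L / 3) →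
      ((k * n : ℕ) : ℝ) < Real.exp (2 * T) ∧
        ((k * n : ℕ) : ℝ) * nearInt ((k * n : ℕ) * α) * nearInt ((k * n : ℕ) * β) ≤ ε ^ 3 := by
  intro k hk1 hk
  set S := Real.sqrt 2 * Real.sqrt L with hSdef
  have hS : 0 ≤ S := mul_nonneg (Real.sqrt_nonneg _) (Real.sqrt_nonneg _)
  have hnpos : (0:ℝ) < n := by exact_mod_cast hn
  have hnε : (n:ℝ) / ε < Real.exp (s₀ + t₀ - S) := by
    have hpos : (0:ℝ) < (n:ℝ) / ε := by positivity
    calc (n:ℝ) / ε = Real.exp (Real.log ((n:ℝ)/ε)) := (Real.exp_log hpos).symm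
    _ < Real.exp (s₀ + t₀ - S) := Real.exp_lt_exp.mpr (by linarith)
  have hnlt : (n:ℝ) < ε * Real.exp (s₀ + t₀ - S) := by
    rwa [div_lt_iff₀ hε0, mul_comm] at hnε
  have hkpos : (0:ℝ) ≤ (k:ℝ) := Nat.cast_nonneg k
  obtain ⟨hs0, hsT⟩ := hs₀
  obtain ⟨ht0, htT⟩ := ht₀
  have hcast : ((k * n : ℕ) : ℝ) = (k:ℝ) * n := by push_cast; ring
  constructor
  · rw [hcast]
    calc (k:ℝ) * n ≤ Real.exp (S / 3) * n := by gcongr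
    _ < Real.exp (S / 3) * (ε * Real.exp (s₀ + t₀ - S)) := by
        exact mul_lt_mul_of_pos_left hnlt (Real.exp_pos _)
    _ = ε * Real.exp (S / 3 + (s₀ + t₀ - S)) := by rw [Real.exp_add]; ring
    _ ≤ 1 * Real.exp (2 * T) := by
        apply mul_le_mul (by linarith) (Real.exp_le_exp.mpr (by linarith))
          (Real.exp_pos _).le (by norm_num)
    _ = Real.exp (2 * T) := one_mul _
  · have ha : nearInt (((k * n : ℕ) : ℝ) * α) ≤ (k:ℝ) * (Real.exp (-s₀) * ε) := by
      have harg : ((k * n : ℕ) : ℝ) * α = (k:ℝ) * ((n:ℝ) * α) := by push_cast; ring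
      rw [harg]
      calc nearInt ((k:ℝ) * ((n:ℝ) * α)) ≤ (k:ℝ) * nearInt ((n:ℝ) * α) := nearInt_nat_mul k _
      _ ≤ (k:ℝ) * (Real.exp (-s₀) * ε) := by gcongr
    have hb : nearInt (((k * n : ℕ) : ℝ) * β) ≤ (k:ℝ) * (Real.exp (-t₀) * ε) := by
      have harg : ((k * n : ℕ) : ℝ) * β = (k:ℝ) * ((n:ℝ) * β) := by push_cast; ring
      rw [harg]
      calc nearInt ((k:ℝ) * ((n:ℝ) * β)) ≤ (k:ℝ) * nearInt ((n:ℝ) * β) := nearInt_nat_mul k _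
      _ ≤ (k:ℝ) * (Real.exp (-t₀) * ε) := by gcongr
    have hk3 : (k:ℝ)^3 ≤ Real.exp S := by
      calc (k:ℝ)^3 ≤ (Real.exp (S/3))^3 := pow_le_pow_left₀ hkpos hk 3
      _ = Real.exp (S/3 * 3) := by rw [← Real.exp_nat_mul]; ring_nf
      _ = Real.exp S := by ring_nf
    have e1 : Real.exp S * Real.exp (s₀ + t₀ - S) * Real.exp (-s₀) * Real.exp (-t₀) = 1 := by
      rw [← Real.exp_add, ← Real.exp_add, ← Real.exp_add,
        show S + (s₀ + t₀ - S) + -s₀ + -t₀ = 0 by ring, Real.exp_zero]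
    have hna : 0 ≤ nearInt (((k * n : ℕ) : ℝ) * α) := nearInt_nonneg _
    have hnb : 0 ≤ nearInt (((k * n : ℕ) : ℝ) * β) := nearInt_nonneg _
    calc ((k * n : ℕ) : ℝ) * nearInt (((k * n : ℕ) : ℝ) * α) * nearInt (((k * n : ℕ) : ℝ) * β)
        ≤ ((k:ℝ) * n) * ((k:ℝ) * (Real.exp (-s₀) * ε)) * ((k:ℝ) * (Real.exp (-t₀) * ε)) := by
          rw [hcast] at ha hb hna hnb ⊢
          apply mul_le_mul (mul_le_mul le_rfl ha hna (by positivity)) hb hnb (by positivity)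
    _ = (k:ℝ)^3 * ((n:ℝ) * (Real.exp (-s₀) * Real.exp (-t₀) * ε^2)) := by ring
    _ ≤ Real.exp S * ((ε * Real.exp (s₀ + t₀ - S)) * (Real.exp (-s₀) * Real.exp (-t₀) * ε^2)) := by
          gcongr <;> positivity
    _ = ε ^ 3 := by
          rw [show Real.exp S * (ε * Real.exp (s₀ + t₀ - S) * (Real.exp (-s₀) * Real.exp (-t₀) * ε^2))
            = (Real.exp S * Real.exp (s₀ + t₀ - S) * Real.exp (-s₀) * Real.exp (-t₀)) * ε^3 by ring,
            e1, one_mul]
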